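/- Let n ≥ 1, d ≥ 0. There exist constants ρ₀, k₀ > 0 depending only on n and d such that for all ρ ≥ ρ₀ and k ≥ k₀, the function U(x,t) = (ρ + kt + |x|²)^{d/2} satisfies ∂ₜU - ∂ₜΔU ≥ ΔU on ℝⁿ × (0,∞), where Δ is the spatial Laplacian. In fact one may take ρ₀ = 2|(d-2)|(n + |d-4|) and k₀ = 4(n + |d-2|). -/

import Mathlib

/-- The Laplacian of a real-valued function on `EuclideanSpace ℝ (Fin n)`,
as the sum of second partial derivatives in the coordinate directions. -/
noncomputable def lap {n : ℕ} (f : EuclideanSpace ℝ (Fin n) → ℝ)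
    (x : EuclideanSpace ℝ (Fin n)) : ℝ :=
  ∑ i : Fin n, fderiv ℝ (fun y => fderiv ℝ f y (EuclideanSpace.single i 1)) x
    (EuclideanSpace.single i 1)

/-!
With `Σ = ρ + k t + |x|²` and `r = |x|²`, the three terms of the inequality are explicit
combinations of `Σ^(d/2-1)`, `Σ^(d/2-2)`, `Σ^(d/2-3)`. Factoring out `(d/2) Σ^(d/2-3) ≥ 0` leaves
the polynomial inequality `2(d-2)Σr + 2nΣ² ≤ kΣ² - (d-2)(d-4)kr - n(d-2)kΣ`. Since `0 ≤ r ≤ Σ`,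
the left side is at most `2(n + |d-2|)Σ² ≤ kΣ²/2` and the right side is at least
`kΣ² - |d-2|(n + |d-4|)kΣ ≥ kΣ²/2`.
-/

lemma hasDerivAt_rpow_affine {ρ k a t : ℝ} (h : 0 < ρ + k * t + a) (p : ℝ) :
    HasDerivAt (fun s => (ρ + k * s + a) ^ p) (k * p * (ρ + k * t + a) ^ (p - 1)) t := by
  have hbase : HasDerivAt (fun s => ρ + k * s + a) k t := by
    simpa using (((hasDerivAt_id t).const_mul k).const_add ρ).add_const a
  convert hbase.rpow_const (p := p) (Or.inl h.ne') using 1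

section RadialPower

variable {n : ℕ}

lemma hasFDerivAt_rpow_const_add_norm_sq {c : ℝ} (hc : 0 < c) (p : ℝ)
    (y : EuclideanSpace ℝ (Fin n)) :
    HasFDerivAt (fun y : EuclideanSpace ℝ (Fin n) => (c + ‖y‖ ^ (2:ℕ)) ^ p)
      ((p * (c + ‖y‖ ^ (2:ℕ)) ^ (p - 1)) • ((2:ℕ) • innerSL ℝ y)) y :=
  ((hasStrictFDerivAt_norm_sq y).hasFDerivAt.const_add c).rpow_const
    (Or.inl (by positivity))

lemma fderiv_rpow_const_add_norm_sq_single {c : ℝ} (hc : 0 < c) (p : ℝ)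
    (y : EuclideanSpace ℝ (Fin n)) (i : Fin n) :
    fderiv ℝ (fun y : EuclideanSpace ℝ (Fin n) => (c + ‖y‖ ^ (2:ℕ)) ^ p) y
      (EuclideanSpace.single i 1) = 2 * p * ((c + ‖y‖ ^ (2:ℕ)) ^ (p - 1) * y i) := by
  rw [(hasFDerivAt_rpow_const_add_norm_sq hc p y).fderiv]
  simp only [smul_apply, coe_innerSL_apply, EuclideanSpace.inner_single_right,
    Real.ringHom_apply, one_mul, nsmul_eq_mul, Nat.cast_ofNat, smul_eq_mul]
  ring

lemma fderiv_fderiv_rpow_const_add_norm_sq_single {c : ℝ} (hc : 0 < c) (p : ℝ)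
    (x : EuclideanSpace ℝ (Fin n)) (i : Fin n) :
    fderiv ℝ (fun y => fderiv ℝ (fun y : EuclideanSpace ℝ (Fin n) => (c + ‖y‖ ^ (2:ℕ)) ^ p) y
        (EuclideanSpace.single i 1)) x (EuclideanSpace.single i 1)
      = 4 * p * (p - 1) * (c + ‖x‖ ^ (2:ℕ)) ^ (p - 2) * x i ^ 2
        + 2 * p * (c + ‖x‖ ^ (2:ℕ)) ^ (p - 1) := by
  simp_rw [fderiv_rpow_const_add_norm_sq_single hc p _ i]
  have hcoord : HasFDerivAt (fun y : EuclideanSpace ℝ (Fin n) => y i)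
      (EuclideanSpace.proj (𝕜 := ℝ) i) x := (EuclideanSpace.proj (𝕜 := ℝ) i).hasFDerivAt
  have hprod : HasFDerivAt (fun y => 2 * p * ((c + ‖y‖ ^ (2:ℕ)) ^ (p - 1) * y i)) _ x :=
    ((hasFDerivAt_rpow_const_add_norm_sq hc (p - 1) x).mul hcoord).const_mul (2 * p)
  rw [hprod.fderiv, show p - 1 - 1 = p - 2 by ring]
  simp only [smul_add, add_apply, smul_apply, PiLp.proj_apply, PiLp.single_eq_same,
    smul_eq_mul, mul_one, coe_innerSL_apply, EuclideanSpace.inner_single_right,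
    Real.ringHom_apply, one_mul, nsmul_eq_mul, Nat.cast_ofNat]
  ring

theorem lap_rpow_const_add_norm_sq {c : ℝ} (hc : 0 < c) (p : ℝ)
    (x : EuclideanSpace ℝ (Fin n)) :
    lap (fun y => (c + ‖y‖ ^ (2:ℕ)) ^ p) x
      = 4 * p * (p - 1) * ‖x‖ ^ (2:ℕ) * (c + ‖x‖ ^ (2:ℕ)) ^ (p - 2)
        + 2 * n * p * (c + ‖x‖ ^ (2:ℕ)) ^ (p - 1) := by
  simp only [lap, fderiv_fderiv_rpow_const_add_norm_sq_single hc, Finset.sum_add_distrib,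
    ← Finset.mul_sum, EuclideanSpace.real_norm_sq_eq x, Finset.sum_const, Finset.card_univ,
    Fintype.card_fin, nsmul_eq_mul]
  ring

lemma hasDerivAt_lap_rpow_affine_add_norm_sq {ρ k t : ℝ} (h : 0 < ρ + k * t) (p : ℝ)
    (x : EuclideanSpace ℝ (Fin n)) :
    HasDerivAt (fun s => lap (fun y => (ρ + k * s + ‖y‖ ^ (2:ℕ)) ^ p) x)
      (k * (4 * p * (p - 1) * (p - 2) * ‖x‖ ^ (2:ℕ) * (ρ + k * t + ‖x‖ ^ (2:ℕ)) ^ (p - 3)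
        + 2 * n * p * (p - 1) * (ρ + k * t + ‖x‖ ^ (2:ℕ)) ^ (p - 2))) t := by
  have hS : 0 < ρ + k * t + ‖x‖ ^ (2:ℕ) := by positivity
  have hlap : (fun s => lap (fun y => (ρ + k * s + ‖y‖ ^ (2:ℕ)) ^ p) x) =ᶠ[nhds t]
      fun s => 4 * p * (p - 1) * ‖x‖ ^ (2:ℕ) * (ρ + k * s + ‖x‖ ^ (2:ℕ)) ^ (p - 2)
        + 2 * n * p * (ρ + k * s + ‖x‖ ^ (2:ℕ)) ^ (p - 1) := by
    have hopen : IsOpen {s : ℝ | 0 < ρ + k * s} := isOpen_lt continuous_const (by fun_prop)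
    filter_upwards [hopen.mem_nhds h] with s hs
    exact lap_rpow_const_add_norm_sq hs p x
  refine HasDerivAt.congr_of_eventuallyEq ?_ hlap
  convert (((hasDerivAt_rpow_affine hS (p - 2)).const_mul (4 * p * (p - 1) * ‖x‖ ^ (2:ℕ))).fun_add
    ((hasDerivAt_rpow_affine hS (p - 1)).const_mul (2 * n * p))) using 1
  rw [show p - 2 - 1 = p - 3 by ring, show p - 1 - 1 = p - 2 by ring]
  ring

end RadialPower

lemma supersolution_poly_ineq {N d S k r : ℝ} (hN : 0 ≤ N) (hr : 0 ≤ r) (hrS : r ≤ S)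
    (hS : 2 * |d - 2| * (N + |d - 4|) ≤ S) (hk : 4 * (N + |d - 2|) ≤ k) :
    2 * (d - 2) * S * r + 2 * N * S ^ 2
      ≤ k * S ^ 2 - (d - 2) * (d - 4) * k * r - N * (d - 2) * k * S := by
  have hS0 : 0 ≤ S := hr.trans hrS
  have hk0 : 0 ≤ k := le_trans (by positivity) hk
  have h1 : (d - 2) * (d - 4) * r ≤ |d - 2| * |d - 4| * S := by
    rw [← abs_mul]
    exact (mul_le_mul_of_nonneg_right (le_abs_self _) hr).trans
      (mul_le_mul_of_nonneg_left hrS (abs_nonneg _))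
  have h2 : (d - 2) * r ≤ |d - 2| * S :=
    (mul_le_mul_of_nonneg_right (le_abs_self _) hr).trans
      (mul_le_mul_of_nonneg_left hrS (abs_nonneg _))
  have h3 : N * (d - 2) ≤ N * |d - 2| := mul_le_mul_of_nonneg_left (le_abs_self _) hN
  linear_combination k * h1 + 2 * S * h2 + k * S * h3 + k * S / 2 * hS + S ^ 2 / 2 * hk

theorem stmt7 (n : ℕ) (hn : 1 ≤ n) (d : ℝ) (hd : 0 ≤ d) :
    ∃ ρ₀ > (0:ℝ), ∃ k₀ > (0:ℝ),
      ∀ ρ k : ℝ, ρ₀ ≤ ρ → k₀ ≤ k →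
        ∀ (x : EuclideanSpace ℝ (Fin n)) (t : ℝ), 0 < t →
          lap (fun y => (ρ + k * t + ‖y‖ ^ (2:ℕ)) ^ (d/2)) x ≤
            deriv (fun s => (ρ + k * s + ‖x‖ ^ (2:ℕ)) ^ (d/2)) t -
              deriv (fun s => lap (fun y => (ρ + k * s + ‖y‖ ^ (2:ℕ)) ^ (d/2)) x) t := by
  have hn0 : (0:ℝ) < n := by exact_mod_cast hn
  refine ⟨2 * |d - 2| * (n + |d - 4|) + 1, by positivity, 4 * (n + |d - 2|), by positivity,
    fun ρ k hρ hk x t ht => ?_⟩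
  have hkt : 0 < k * t := mul_pos (lt_of_lt_of_le (by positivity) hk) ht
  have hc : 0 < ρ + k * t := add_pos (lt_of_lt_of_le (by positivity) hρ) hkt
  have hSpos : 0 < ρ + k * t + ‖x‖ ^ (2:ℕ) := by positivity
  rw [lap_rpow_const_add_norm_sq hc, (hasDerivAt_rpow_affine hSpos _).deriv,
    (hasDerivAt_lap_rpow_affine_add_norm_sq hc _ x).deriv]
  set r := ‖x‖ ^ (2:ℕ)
  set S := ρ + k * t + r
  have hr : 0 ≤ r := by positivity
  have hpow : ∀ j : ℕ, S ^ (d / 2 - 3 + j) = S ^ (d / 2 - 3) * S ^ j :=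
    Real.rpow_add_natCast hSpos.ne' _
  have h1 : S ^ (d / 2 - 1) = S ^ (d / 2 - 3) * S ^ 2 := by
    convert hpow 2 using 2; push_cast; ring
  have h2 : S ^ (d / 2 - 2) = S ^ (d / 2 - 3) * S := by
    convert hpow 1 using 2 <;> push_cast <;> ring
  have hpoly := supersolution_poly_ineq hn0.le hr (by linarith : r ≤ S)
    (by linarith : 2 * |d - 2| * (n + |d - 4|) ≤ S) hk
  rw [h1, h2]
  linear_combination (d / 2 * S ^ (d / 2 - 3)) * hpoly
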